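/- For n ≥ 1, the number of subsets S ⊆ {1,...,n} that arise as the set of positions of flat steps of some Łukasiewicz path of length n equals 2^n − n. Equivalently, S arises as such a set if and only if |S| ≠ n − 1. -/

import Mathlib

/-- A Łukasiewicz path: vertical step components, each `≥ -1`, all partial sums
nonnegative, total sum `0`. -/
def IsLukas (w : List ℤ) : Prop :=
  (∀ s ∈ w, -1 ≤ s) ∧ (∀ k, 0 ≤ (w.take k).sum) ∧ w.sum = 0

/-- The set of (1-indexed) positions of flat steps `F = (1,0)` of `w`. -/
def flatPos (w : List ℤ) : Finset ℕ :=
  (Finset.Icc 1 w.length).filter fun j => w[j - 1]? = some 0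

/-!
A nonempty path of total height `0` cannot have exactly one non-flat step: that step alone would
make up the total. Conversely, if the set `T` of non-flat positions has `|T| ≠ 1`, put an up-step
of height `|T| - 1` at the first point of `T` and a down-step at every other point of `T`; each
partial sum is then `0` before the first point of `T` and `|T|` minus the number of points of `T`
passed so far afterwards. Counting the subsets of `{1, …, n}` whose size is not `n - 1` gives
`2 ^ n - n`.
-/

open Finset

def pathOfSteps (f : ℕ → ℤ) (n : ℕ) : List ℤ :=
  (List.range n).map fun i => f (i + 1)

section pathOfSteps

variable (f : ℕ → ℤ) (n : ℕ)

@[simp]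
lemma length_pathOfSteps : (pathOfSteps f n).length = n := by
  simp [pathOfSteps]

lemma take_pathOfSteps (k : ℕ) : (pathOfSteps f n).take k = pathOfSteps f (min k n) := by
  rw [pathOfSteps, ← List.map_take, List.take_range, pathOfSteps]

lemma sum_pathOfSteps : (pathOfSteps f n).sum = ∑ j ∈ Icc 1 n, f j := by
  change ∑ i ∈ range n, f (i + 1) = _
  rw [range_eq_Ico, sum_Ico_add', zero_add, Ico_add_one_right_eq_Icc]

lemma flatPos_pathOfSteps : flatPos (pathOfSteps f n) = {j ∈ Icc 1 n | f j = 0} := by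
  ext j
  simp only [flatPos, length_pathOfSteps, mem_filter, mem_Icc, and_congr_right_iff, and_imp]
  intro hj1 hjn
  simp [pathOfSteps, List.getElem?_range (by omega : j - 1 < n), Nat.sub_add_cancel hj1]

lemma isLukas_pathOfSteps (hstep : ∀ j, -1 ≤ f j) (hprefix : ∀ k, 0 ≤ ∑ j ∈ Icc 1 k, f j)
    (htotal : ∑ j ∈ Icc 1 n, f j = 0) : IsLukas (pathOfSteps f n) := by
  refine ⟨?_, fun k => ?_, ?_⟩
  · simp only [pathOfSteps, List.mem_map]
    rintro _ ⟨i, -, rfl⟩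
    exact hstep _
  · rw [take_pathOfSteps, sum_pathOfSteps]
    exact hprefix _
  · rwa [sum_pathOfSteps]

end pathOfSteps

lemma flatPos_subset_Icc (w : List ℤ) : flatPos w ⊆ Icc 1 w.length :=
  filter_subset _ _

lemma pathOfSteps_getD (w : List ℤ) : pathOfSteps (fun j => w.getD (j - 1) 0) w.length = w := by
  apply List.ext_getElem (length_pathOfSteps _ _)
  intro i _ hi
  simp [pathOfSteps, hi]

lemma Finset.sum_ne_zero_of_card_filter_ne_zero_eq_one {ι M : Type*} [AddCommMonoid M]
    [DecidableEq M] {s : Finset ι} {f : ι → M}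
    (h : #{i ∈ s | f i ≠ 0} = 1) : ∑ i ∈ s, f i ≠ 0 := by
  obtain ⟨i, hi⟩ := card_eq_one.1 h
  have hfi : i ∈ {i ∈ s | f i ≠ 0} := hi ▸ mem_singleton_self i
  rw [← sum_filter_ne_zero, hi, sum_singleton]
  exact (mem_filter.1 hfi).2

lemma card_flatPos_ne_length_sub_one {w : List ℤ} (hw : w.sum = 0) (hne : w ≠ []) :
    #(flatPos w) ≠ w.length - 1 := by
  have hpos := List.length_pos_iff.2 hne
  rw [← pathOfSteps_getD w, sum_pathOfSteps] at hw
  rw [← pathOfSteps_getD w, flatPos_pathOfSteps, length_pathOfSteps]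
  intro hcard
  refine sum_ne_zero_of_card_filter_ne_zero_eq_one ?_ hw
  have := card_filter_add_card_filter_not (s := Icc 1 w.length) (fun j => w.getD (j - 1) 0 = 0)
  simp only [Nat.card_Icc, add_tsub_cancel_right, ← ne_eq] at this
  omega

lemma Finset.sInf_coe_mem {T : Finset ℕ} (hT : T.Nonempty) : sInf (T : Set ℕ) ∈ T :=
  Nat.sInf_mem (coe_nonempty.2 hT)

-- `sInf ↑T` is the first point of `T`; for `T = ∅` it is `0`, harmless since then `#T = 0`.
noncomputable def spikeSteps (T : Finset ℕ) (j : ℕ) : ℤ :=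
  (if j = sInf (T : Set ℕ) then (#T : ℤ) else 0) - if j ∈ T then 1 else 0

section spikeSteps

variable {T : Finset ℕ}

lemma neg_one_le_spikeSteps (j : ℕ) : -1 ≤ spikeSteps T j := by
  unfold spikeSteps
  split_ifs <;> omega

lemma sum_spikeSteps (s : Finset ℕ) :
    ∑ j ∈ s, spikeSteps T j = (if sInf (T : Set ℕ) ∈ s then (#T : ℤ) else 0) - #(s ∩ T) := by
  simp only [spikeSteps, sum_sub_distrib, sum_ite_eq', sum_boole, filter_mem_eq_inter]

lemma sum_Icc_spikeSteps_nonneg (hT0 : 0 ∉ T) (k : ℕ) : 0 ≤ ∑ j ∈ Icc 1 k, spikeSteps T j := by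
  rw [sum_spikeSteps]
  split_ifs with hm
  · have := card_le_card (inter_subset_right (s₁ := Icc 1 k) (s₂ := T))
    omega
  · suffices Icc 1 k ∩ T = ∅ by simp [this]
    refine eq_empty_of_forall_notMem fun j hj => hm ?_
    obtain ⟨hjk, hjT⟩ := mem_inter.1 hj
    have hmT := sInf_coe_mem ⟨j, hjT⟩
    have hmj : sInf (T : Set ℕ) ≤ j := Nat.sInf_le hjT
    have : sInf (T : Set ℕ) ≠ 0 := fun h => hT0 (h ▸ hmT)
    simp only [mem_Icc] at hjk ⊢
    omega

lemma sum_Icc_spikeSteps_eq_zero {n : ℕ} (hT : T ⊆ Icc 1 n) :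
    ∑ j ∈ Icc 1 n, spikeSteps T j = 0 := by
  rcases T.eq_empty_or_nonempty with rfl | hne
  · simp [spikeSteps]
  · rw [sum_spikeSteps, if_pos (hT (sInf_coe_mem hne)), inter_eq_right.2 hT, sub_self]

lemma spikeSteps_eq_zero_iff (hT : #T ≠ 1) {j : ℕ} : spikeSteps T j = 0 ↔ j ∉ T := by
  rcases T.eq_empty_or_nonempty with rfl | hne
  · simp [spikeSteps]
  have hmT := sInf_coe_mem hne
  by_cases hj : j ∈ T
  · have hT' : (#T : ℤ) ≠ 1 := by exact_mod_cast hT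
    simp only [spikeSteps, hj, if_true, not_true_eq_false, iff_false]
    split_ifs <;> omega
  · have hjm : j ≠ sInf (T : Set ℕ) := fun h => hj (h ▸ hmT)
    simp [spikeSteps, hj, hjm]

end spikeSteps

lemma exists_isLukas_flatPos_eq {n : ℕ} {S : Finset ℕ} (hS : S ⊆ Icc 1 n) (hcard : #S ≠ n - 1) :
    ∃ w : List ℤ, IsLukas w ∧ w.length = n ∧ flatPos w = S := by
  set T := Icc 1 n \ S
  have hT1 : #T ≠ 1 := by
    rw [card_sdiff_of_subset hS, Nat.card_Icc]
    omega
  have hT0 : 0 ∉ T := by simp [T]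
  refine ⟨pathOfSteps (spikeSteps T) n, isLukas_pathOfSteps _ _ neg_one_le_spikeSteps
    (sum_Icc_spikeSteps_nonneg hT0) (sum_Icc_spikeSteps_eq_zero sdiff_subset),
    length_pathOfSteps _ _, ?_⟩
  ext j
  simp only [flatPos_pathOfSteps, mem_filter, spikeSteps_eq_zero_iff hT1, T, mem_sdiff]
  constructor
  · tauto
  · exact fun hj => ⟨hS hj, fun h => h.2 hj⟩

lemma card_filter_powerset_card_ne {α : Type*} (s : Finset α) (k : ℕ) :
    #{t ∈ s.powerset | #t ≠ k} = 2 ^ #s - (#s).choose k := by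
  have := card_filter_add_card_filter_not (s := s.powerset) (fun t => #t = k)
  rw [← powersetCard_eq_filter, card_powersetCard, card_powerset] at this
  simp only [← ne_eq] at this
  omega

theorem flat_position_sets (n : ℕ) (hn : 1 ≤ n) :
    Set.ncard {S : Finset ℕ |
        ∃ w : List ℤ, IsLukas w ∧ w.length = n ∧ flatPos w = S} = 2 ^ n - n ∧
    ∀ S : Finset ℕ, S ⊆ Finset.Icc 1 n →
      ((∃ w : List ℤ, IsLukas w ∧ w.length = n ∧ flatPos w = S) ↔ S.card ≠ n - 1) := by
  have hiff : ∀ S : Finset ℕ, S ⊆ Icc 1 n →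
      ((∃ w : List ℤ, IsLukas w ∧ w.length = n ∧ flatPos w = S) ↔ #S ≠ n - 1) := by
    refine fun S hS => ⟨?_, exists_isLukas_flatPos_eq hS⟩
    rintro ⟨w, hw, rfl, rfl⟩
    exact card_flatPos_ne_length_sub_one hw.2.2 (List.ne_nil_of_length_pos hn)
  have hset : {S : Finset ℕ | ∃ w : List ℤ, IsLukas w ∧ w.length = n ∧ flatPos w = S} =
      ↑{S ∈ (Icc 1 n).powerset | #S ≠ n - 1} := by
    ext S
    rw [Set.mem_ofPred_eq, coe_filter, Set.mem_ofPred_eq, mem_powerset]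
    refine ⟨?_, fun h => (hiff S h.1).2 h.2⟩
    rintro ⟨w, hw, rfl, rfl⟩
    exact ⟨flatPos_subset_Icc w, (hiff _ (flatPos_subset_Icc w)).1 ⟨w, hw, rfl, rfl⟩⟩
  refine ⟨?_, hiff⟩
  rw [hset, Set.ncard_coe_finset, card_filter_powerset_card_ne, Nat.card_Icc, add_tsub_cancel_right,
    Nat.choose_symm hn, Nat.choose_one_right]
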